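/- Every compact Hausdorff space K which is Fréchet–Urysohn and has a dense set of isolated points is homeomorphic to the Higson compactification of some finitary coarse space. -/

import Mathlib

open Set Filter Topology

universe u u₁ u₂ v w

section CoarsePreamble

variable {X : Type u}

/-- An entourage on `X` is a subset of `X × X` containing the diagonal. -/
def IsEntourage (E : Set (X × X)) : Prop := ∀ x : X, (x, x) ∈ E

/-- Composition `E ∘ F` of two entourages. -/
def entComp (E F : Set (X × X)) : Set (X × X) :=
  {p | ∃ y : X, (p.1, y) ∈ E ∧ (y, p.2) ∈ F}

/-- Inverse `E⁻¹` of an entourage. -/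
def entInv (E : Set (X × X)) : Set (X × X) := {p | (p.2, p.1) ∈ E}

/-- The `E`-ball `E[x]` centered at `x`. -/
def entBall (E : Set (X × X)) (x : X) : Set X := {y | (x, y) ∈ E}

/-- A coarse structure on `X`: a family of entourages covering `X × X`, closed under
`E ∘ F⁻¹` up to enlargement, and downward closed among entourages. -/
structure IsCoarseStructure (𝓔 : Set (Set (X × X))) : Prop where
  ent : ∀ E ∈ 𝓔, IsEntourage E
  cover : ∀ p : X × X, ∃ E ∈ 𝓔, p ∈ E
  comp_subset : ∀ E ∈ 𝓔, ∀ F ∈ 𝓔, ∃ G ∈ 𝓔, entComp E (entInv F) ⊆ G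
  downward : ∀ E F : Set (X × X), IsEntourage E → E ⊆ F → F ∈ 𝓔 → E ∈ 𝓔

/-- A set `B` is bounded in the coarse space `(X, 𝓔)` if `B ⊆ E[x]` for some `E ∈ 𝓔`, `x ∈ X`. -/
def IsBoundedSet (𝓔 : Set (Set (X × X))) (B : Set X) : Prop :=
  ∃ E ∈ 𝓔, ∃ x : X, B ⊆ entBall E x

/-- A coarse structure is finitary if the cardinalities of balls of each entourage
are uniformly finite. -/
def IsFinitaryCoarse (𝓔 : Set (Set (X × X))) : Prop :=
  ∀ E ∈ 𝓔, ∃ n : ℕ, ∀ x : X, (entBall E x).Finite ∧ (entBall E x).ncard ≤ n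

/-- `d : X → X → ℝ` is a metric. -/
structure IsMetricOn (d : X → X → ℝ) : Prop where
  refl : ∀ x, d x x = 0
  eq_of : ∀ x y, d x y = 0 → x = y
  symm : ∀ x y, d x y = d y x
  triangle : ∀ x y z, d x z ≤ d x y + d y z

/-- A coarse structure is metrizable if it is the coarse structure of some metric on `X`,
i.e. consists of all entourages of uniformly bounded `d`-diameter. -/
def IsMetrizableCoarse (𝓔 : Set (Set (X × X))) : Prop :=
  ∃ d : X → X → ℝ, IsMetricOn d ∧
    𝓔 = {E | IsEntourage E ∧ ∃ n : ℕ, ∀ p ∈ E, d p.1 p.2 ≤ (n : ℝ)}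

/-- A cellular entourage: a symmetric and transitive entourage (an equivalence relation). -/
def IsCellularEnt (E : Set (X × X)) : Prop :=
  (∀ p : X × X, p ∈ E → (p.2, p.1) ∈ E) ∧
    ∀ x y z : X, (x, y) ∈ E → (y, z) ∈ E → (x, z) ∈ E

/-- `𝓑` is a base of the coarse structure `𝓔`. -/
def IsCoarseBase (𝓔 𝓑 : Set (Set (X × X))) : Prop :=
  𝓑 ⊆ 𝓔 ∧ ∀ E ∈ 𝓔, ∃ B ∈ 𝓑, E ⊆ B

/-- A coarse structure is cellular if it has a base of cellular entourages. -/
def IsCellularCoarse (𝓔 : Set (Set (X × X))) : Prop :=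
  ∃ 𝓑 : Set (Set (X × X)), IsCoarseBase 𝓔 𝓑 ∧ ∀ B ∈ 𝓑, IsCellularEnt B

/-- A subset `D` is `𝓔`-discrete (thin). -/
def IsCoarseDiscrete (𝓔 : Set (Set (X × X))) (D : Set X) : Prop :=
  ∀ E ∈ 𝓔, ∃ B : Set X, IsBoundedSet 𝓔 B ∧ ∀ x ∈ D \ B, D ∩ entBall E x = {x}

/-- The basic entourage `E_F` determined by a set `F` of permutations of `X`. -/
def permEnt (F : Set (Equiv.Perm X)) : Set (X × X) :=
  {p | p.2 = p.1 ∨ ∃ g ∈ F, p.2 = g p.1}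

/-- The coarse structure `𝓔_G` generated by a set (group) `S` of permutations of `X`:
all entourages contained in `E_F` for some finite `F ⊆ S`. -/
def permCoarse (S : Set (Equiv.Perm X)) : Set (Set (X × X)) :=
  {E | IsEntourage E ∧ ∃ F : Finset (Equiv.Perm X),
    (F : Set (Equiv.Perm X)) ⊆ S ∧ E ⊆ permEnt (F : Set (Equiv.Perm X))}

variable {M : Type v} [MetricSpace M]

/-- A function `φ : X → M` is slowly oscillating. -/
def SlowlyOscillating (𝓔 : Set (Set (X × X))) (φ : X → M) : Prop :=
  ∀ ε : ℝ, 0 < ε → ∀ E ∈ 𝓔, ∃ B : Set X, IsBoundedSet 𝓔 B ∧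
    ∀ x : X, x ∉ B → EMetric.diam (φ '' entBall E x) < ENNReal.ofReal ε

/-- Two sets are asymptotically separated if `E[A] ∩ E[B]` is bounded for every `E ∈ 𝓔`. -/
def AsymptoticallySeparated (𝓔 : Set (Set (X × X))) (A B : Set X) : Prop :=
  ∀ E ∈ 𝓔, IsBoundedSet 𝓔 ((⋃ a ∈ A, entBall E a) ∩ ⋃ b ∈ B, entBall E b)

/-- A coarse space `(X, 𝓔)` is `M`-normal. -/
def IsCoarseNormal (𝓔 : Set (Set (X × X))) (M : Type v) [MetricSpace M] : Prop :=
  ∀ A B : Set X, A.Nonempty → B.Nonempty → Disjoint A B →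
    AsymptoticallySeparated 𝓔 A B →
    ∃ φ : X → M, SlowlyOscillating 𝓔 φ ∧
      ∃ ε : ℝ, 0 < ε ∧ ∀ a ∈ A, ∀ b ∈ B, ε ≤ dist (φ a) (φ b)

/-- `so(X,𝓔;M)`: the bounded slowly oscillating functions `X → M`. -/
def soSet (𝓔 : Set (Set (X × X))) (M : Type v) [MetricSpace M] : Set (X → M) :=
  {φ | Bornology.IsBounded (Set.range φ) ∧ SlowlyOscillating 𝓔 φ}

/-- The canonical map `δ_M : X → M^{so(X,𝓔;M)}`. -/
def deltaMap (𝓔 : Set (Set (X × X))) (M : Type v) [MetricSpace M] :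
    X → (↥(soSet 𝓔 M) → M) := fun x f => f.1 x

/-- The underlying set of the `M`-compactification: the closure of `δ_M(X)`. -/
def hCompSet (𝓔 : Set (Set (X × X))) (M : Type v) [MetricSpace M] :
    Set (↥(soSet 𝓔 M) → M) := closure (Set.range (deltaMap 𝓔 M))

/-- The `M`-compactification `h_M(X,𝓔)` of the coarse space `(X,𝓔)`. -/
abbrev HComp (𝓔 : Set (Set (X × X))) (M : Type v) [MetricSpace M] :=
  ↥(hCompSet 𝓔 M)

/-- The copy of a point `x ∈ X` inside the `M`-compactification. -/
def deltaEmb (𝓔 : Set (Set (X × X))) (M : Type v) [MetricSpace M] (x : X) :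
    HComp 𝓔 M := ⟨deltaMap 𝓔 M x, subset_closure (Set.mem_range_self x)⟩

/-- The permutation group `G_{X, h_M(X,𝓔)}` of the `M`-compactification, as a set of
permutations of `X` (`X` being identified with the set of isolated points of `h_M(X,𝓔)`
via `δ_M`): those permutations induced by homeomorphisms of `h_M(X,𝓔)` fixing all
points outside (the image of) `X`. -/
def hPermGroup (𝓔 : Set (Set (X × X))) (M : Type v) [MetricSpace M] :
    Set (Equiv.Perm X) :=
  {σ | ∃ h : HComp 𝓔 M ≃ₜ HComp 𝓔 M,
    (∀ z : HComp 𝓔 M, z ∉ Set.range (deltaEmb 𝓔 M) → h z = z) ∧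
    ∀ x : X, h (deltaEmb 𝓔 M x) = deltaEmb 𝓔 M (σ x)}

end CoarsePreamble

section TopPreamble

/-- The set of isolated points of a topological space. -/
def isolatedPoints (K : Type w) [TopologicalSpace K] : Set K :=
  {x | IsOpen ({x} : Set K)}

/-- A compactification: a compact Hausdorff space with dense set of isolated points. -/
def IsCompactification (K : Type w) [TopologicalSpace K] : Prop :=
  CompactSpace K ∧ T2Space K ∧ Dense (isolatedPoints K)

/-- The permutation group `G_{K',K}` of a compactification `K`: permutations of the
set `K'` of isolated points induced by homeomorphisms of `K` fixing `K \ K'` pointwise. -/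
def homeoPerms (K : Type w) [TopologicalSpace K] :
    Set (Equiv.Perm ↥(isolatedPoints K)) :=
  {σ | ∃ h : K ≃ₜ K, (∀ z : K, z ∉ isolatedPoints K → h z = z) ∧
    ∀ x : ↥(isolatedPoints K), h x.val = (σ x).val}

/-- The oscillation of `φ : K' → M` at a point `z ∈ K`. -/
noncomputable def oscAt {K : Type w} [TopologicalSpace K] {M : Type v} [MetricSpace M]
    (φ : ↥(isolatedPoints K) → M) (z : K) : ENNReal :=
  ⨅ (O : Set K) (_ : IsOpen O) (_ : z ∈ O),
    EMetric.diam (φ '' (Subtype.val ⁻¹' O))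

/-- A compactification `K` is `M`-soft. -/
def IsMSoft (K : Type w) [TopologicalSpace K] (M : Type v) [MetricSpace M] : Prop :=
  ∀ φ : ↥(isolatedPoints K) → M, Bornology.IsBounded (Set.range φ) →
    (∃ z : K, 0 < oscAt φ z) →
    ∃ σ ∈ homeoPerms K, ∃ ε : ℝ, 0 < ε ∧
      {x : ↥(isolatedPoints K) | ε ≤ dist (φ (σ x)) (φ x)}.Infinite

/-- A compactification `K` is soft. -/
def IsSoft (K : Type w) [TopologicalSpace K] : Prop :=
  ∀ A B : Set ↥(isolatedPoints K), Disjoint A B →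
    (closure (Subtype.val '' A) ∩ closure (Subtype.val '' B)).Nonempty →
    ∃ σ ∈ homeoPerms K, {x : ↥(isolatedPoints K) | x ∈ A ∧ σ x ∈ B}.Infinite

/-- `uc(K',K;M)`: restrictions to the set of isolated points of continuous functions `K → M`. -/
def ucSet (K : Type w) [TopologicalSpace K] (M : Type v) [MetricSpace M] :
    Set (↥(isolatedPoints K) → M) :=
  {φ | ∃ f : K → M, Continuous f ∧ ∀ x : ↥(isolatedPoints K), f x.val = φ x}

/-- `uc(X, h_M(X,𝓔); M)`: restrictions to `X` (via `δ_M`) of continuous functions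
`h_M(X,𝓔) → M`. -/
def ucHComp {X : Type u} (𝓔 : Set (Set (X × X))) (M : Type v) [MetricSpace M] :
    Set (X → M) :=
  {φ | ∃ f : HComp 𝓔 M → M, Continuous f ∧ ∀ x : X, f (deltaEmb 𝓔 M x) = φ x}

/-- The cardinal `Δ`: the smallest cardinality of a base of a cellular finitary coarse
structure on `ω` containing no infinite discrete subsets. -/
noncomputable def smallDeltaCard : Cardinal.{0} :=
  sInf {c : Cardinal.{0} | ∃ 𝓔 : Set (Set (ℕ × ℕ)), IsCoarseStructure 𝓔 ∧
    IsCellularCoarse 𝓔 ∧ IsFinitaryCoarse 𝓔 ∧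
    (∀ D : Set ℕ, IsCoarseDiscrete 𝓔 D → D.Finite) ∧
    ∃ 𝓑 : Set (Set (ℕ × ℕ)), IsCoarseBase 𝓔 𝓑 ∧ Cardinal.mk ↥𝓑 = c}

/-- The cardinal `𝔭`. -/
noncomputable def pCard : Cardinal.{0} :=
  sInf {c : Cardinal.{0} | ∃ F : Set (Set ℕ), (∀ A ∈ F, A.Infinite) ∧
    (∀ S : Finset (Set ℕ), (S : Set (Set ℕ)) ⊆ F → (⋂ A ∈ S, A).Infinite) ∧
    (∀ I : Set ℕ, I.Infinite → ∃ A ∈ F, (I \ A).Infinite) ∧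
    Cardinal.mk ↥F = c}

/-- The character `χ(x;K)` of a point. -/
noncomputable def charAt (K : Type w) [TopologicalSpace K] (x : K) : Cardinal.{w} :=
  sInf {c : Cardinal.{w} | ∃ 𝓑 : Set (Set K), (∀ U ∈ 𝓑, IsOpen U ∧ x ∈ U) ∧
    (∀ V : Set K, IsOpen V → x ∈ V → ∃ U ∈ 𝓑, U ⊆ V) ∧ Cardinal.mk ↥𝓑 = c}

/-- The character `χ(K)` of a space. -/
noncomputable def spaceChar (K : Type w) [TopologicalSpace K] : Cardinal.{w} :=
  ⨆ x : K, charAt K x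

/-- A corona: a compact Hausdorff space homeomorphic to the remainder of a
compactification of the countable discrete space `ℕ`. -/
def IsCorona (K : Type w) [TopologicalSpace K] : Prop :=
  CompactSpace K ∧ T2Space K ∧
    ∃ (C : Type w) (_ : TopologicalSpace C), IsCompactification C ∧
      (isolatedPoints C).Infinite ∧ (isolatedPoints C).Countable ∧
      Nonempty (K ≃ₜ ↥((isolatedPoints C)ᶜ))

/-- A soft corona. -/
def IsSoftCorona (K : Type w) [TopologicalSpace K] : Prop :=
  CompactSpace K ∧ T2Space K ∧
    ∃ (C : Type w) (_ : TopologicalSpace C), IsCompactification C ∧ IsSoft C ∧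
      (isolatedPoints C).Infinite ∧ (isolatedPoints C).Countable ∧
      Nonempty (K ≃ₜ ↥((isolatedPoints C)ᶜ))

/-- An `M`-soft corona. -/
def IsMSoftCorona (K : Type w) [TopologicalSpace K] (M : Type v) [MetricSpace M] : Prop :=
  CompactSpace K ∧ T2Space K ∧
    ∃ (C : Type w) (_ : TopologicalSpace C), IsCompactification C ∧ IsMSoft C M ∧
      (isolatedPoints C).Infinite ∧ (isolatedPoints C).Countable ∧
      Nonempty (K ≃ₜ ↥((isolatedPoints C)ᶜ))

end TopPreamble

/-!
Let `X` be the set of isolated points of `K`, and let `𝓔` consist of the entourages `E` whose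
balls `E[x]` and `E⁻¹[x]` have uniformly bounded size and along which every continuous
`f : K → ℝ` becomes small: for each `ε > 0` only finitely many pairs of `E` are `ε`-apart under
`f`. This is a finitary coarse structure, and restrictions of continuous functions are slowly
oscillating for it.

Conversely, every bounded slowly oscillating `φ : X → ℝ` extends continuously to `K`. Otherwise
two sets `A, B ⊆ X` on which the values of `φ` are `ε`-apart accumulate at a common point `z`,
which is not isolated. By the Fréchet–Urysohn property there are injective sequences `aₙ ∈ A`
and `bₙ ∈ B` converging to `z`. The pairs `(aₙ, bₙ)` then form an entourage of `𝓔`, and along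
it `φ` does not oscillate slowly. Evaluating these extensions embeds `K` into
`ℝ^{so(X,𝓔;ℝ)}`, and the image is the closure of `δ(X)`.
-/

open Function

lemma Set.encard_biUnion_le_mul {α β : Type*} {s : Set α} (hs : s.Finite) {t : α → Set β}
    {m : ℕ∞} (ht : ∀ a ∈ s, (t a).encard ≤ m) : (⋃ a ∈ s, t a).encard ≤ s.encard * m := by
  have h := hs.toFinset.set_encard_biUnion_le t
  simp only [Finite.mem_toFinset] at h
  calc _ ≤ _ := h
    _ ≤ hs.toFinset.card • m := Finset.sum_le_card_nsmul _ _ _ (by simpa using ht)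
    _ = _ := by rw [hs.encard_eq_coe_toFinset_card, nsmul_eq_mul]

lemma Set.Infinite.exists_injective_comp {α : Type*} {u : ℕ → α} (h : (range u).Infinite) :
    ∃ g : ℕ → ℕ, Injective (u ∘ g) := by
  choose g hg using fun n => (h.natEmbedding _ n).2
  exact ⟨g, fun m n hmn => (h.natEmbedding _).injective (Subtype.ext (by simpa [hg] using hmn))⟩

section Vanishing

variable {X : Type*}

lemma entBall_entComp (E F : Set (X × X)) (x : X) :
    entBall (entComp E F) x = ⋃ y ∈ entBall E x, entBall F y := by
  ext z; simp [entBall, entComp]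

lemma entBall_mono {E F : Set (X × X)} (h : E ⊆ F) (x : X) : entBall E x ⊆ entBall F x :=
  fun _ hy => h hy

lemma entInv_entComp_entInv (E F : Set (X × X)) :
    entInv (entComp E (entInv F)) = entComp F (entInv E) := by
  ext p; simp [entInv, entComp, and_comm]

lemma entInv_diagonal : entInv (Set.diagonal X) = Set.diagonal X := by
  ext p; simp [entInv, eq_comm]

lemma entInv_range {ι : Type*} (a b : ι → X) :
    entInv (range fun n => (a n, b n)) = range fun n => (b n, a n) := by
  ext p; simp [entInv, Prod.ext_iff, and_comm]

def HasBoundedBalls (E : Set (X × X)) : Prop :=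
  ∃ n : ℕ, ∀ x, (entBall E x).encard ≤ n

namespace HasBoundedBalls

variable {E F : Set (X × X)}

lemma finite_entBall (h : HasBoundedBalls E) (x : X) : (entBall E x).Finite :=
  let ⟨_, hn⟩ := h; Set.finite_of_encard_le_coe (hn x)

lemma mono (h : HasBoundedBalls F) (hEF : E ⊆ F) : HasBoundedBalls E :=
  let ⟨n, hn⟩ := h; ⟨n, fun x => (Set.encard_le_encard (entBall_mono hEF x)).trans (hn x)⟩

lemma union (hE : HasBoundedBalls E) (hF : HasBoundedBalls F) : HasBoundedBalls (E ∪ F) := by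
  obtain ⟨n, hn⟩ := hE
  obtain ⟨m, hm⟩ := hF
  refine ⟨n + m, fun x => ?_⟩
  push_cast
  exact (Set.encard_union_le _ _).trans (add_le_add (hn x) (hm x))

lemma entComp (hE : HasBoundedBalls E) (hF : HasBoundedBalls F) :
    HasBoundedBalls (entComp E F) := by
  obtain ⟨n, hn⟩ := hE
  obtain ⟨m, hm⟩ := hF
  refine ⟨n * m, fun x => ?_⟩
  rw [entBall_entComp]
  push_cast
  exact (Set.encard_biUnion_le_mul (Set.finite_of_encard_le_coe (hn x)) fun y _ => hm y).trans
    (mul_le_mul_left (hn x) _)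

end HasBoundedBalls

lemma hasBoundedBalls_diagonal : HasBoundedBalls (Set.diagonal X) :=
  ⟨1, fun x => by simp [entBall]⟩

lemma Set.Finite.hasBoundedBalls {S : Set (X × X)} (hS : S.Finite) : HasBoundedBalls S :=
  ⟨S.ncard, fun x => by
    rw [hS.cast_ncard_eq]
    exact (Set.encard_le_encard (show entBall S x ⊆ Prod.snd '' S from
      fun y hy => ⟨(x, y), hy, rfl⟩)).trans (Set.encard_image_le _ _)⟩

lemma hasBoundedBalls_range_of_injective {ι : Type*} {a b : ι → X} (ha : Injective a) :
    HasBoundedBalls (range fun n => (a n, b n)) := by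
  refine ⟨1, fun x => ?_⟩
  rw [Nat.cast_one, Set.encard_le_one_iff]
  rintro _ _ ⟨m, hm⟩ ⟨n, hn⟩
  simp only [Prod.mk.injEq] at hm hn
  rw [← hm.2, ← hn.2, ha (hm.1.trans hn.1.symm)]

variable {M : Type*} [PseudoMetricSpace M]

structure IsVanishing (𝓕 : Set (X → M)) (E : Set (X × X)) : Prop where
  hasBoundedBalls : HasBoundedBalls E
  hasBoundedBalls_entInv : HasBoundedBalls (entInv E)
  finite_le_dist : ∀ f ∈ 𝓕, ∀ ε : ℝ, 0 < ε → {p ∈ E | ε ≤ dist (f p.1) (f p.2)}.Finite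

def vanishingCoarse (𝓕 : Set (X → M)) : Set (Set (X × X)) :=
  {E | IsEntourage E ∧ IsVanishing 𝓕 E}

namespace IsVanishing

variable {𝓕 : Set (X → M)} {E F : Set (X × X)}

lemma mono (hF : IsVanishing 𝓕 F) (hEF : E ⊆ F) : IsVanishing 𝓕 E where
  hasBoundedBalls := hF.hasBoundedBalls.mono hEF
  hasBoundedBalls_entInv := hF.hasBoundedBalls_entInv.mono (Set.preimage_mono hEF)
  finite_le_dist f hf ε hε := (hF.finite_le_dist f hf ε hε).subset fun _ hp => ⟨hEF hp.1, hp.2⟩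

lemma union (hE : IsVanishing 𝓕 E) (hF : IsVanishing 𝓕 F) : IsVanishing 𝓕 (E ∪ F) where
  hasBoundedBalls := hE.hasBoundedBalls.union hF.hasBoundedBalls
  hasBoundedBalls_entInv := hE.hasBoundedBalls_entInv.union hF.hasBoundedBalls_entInv
  finite_le_dist f hf ε hε := ((hE.finite_le_dist f hf ε hε).union
    (hF.finite_le_dist f hf ε hε)).subset fun _ ⟨hp, h⟩ => hp.imp (⟨·, h⟩) (⟨·, h⟩)

lemma entComp_entInv (hE : IsVanishing 𝓕 E) (hF : IsVanishing 𝓕 F) :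
    IsVanishing 𝓕 (entComp E (entInv F)) where
  hasBoundedBalls := hE.hasBoundedBalls.entComp hF.hasBoundedBalls_entInv
  hasBoundedBalls_entInv := by
    rw [entInv_entComp_entInv]
    exact hF.hasBoundedBalls.entComp hE.hasBoundedBalls_entInv
  -- if `(x, z)` is `ε`-apart with middle point `y`, then `(x, y)` or `(z, y)` is `ε / 2`-apart,
  -- and each such pair has only finitely many partners `z`, resp. `x`
  finite_le_dist f hf ε hε := by
    refine (((hE.finite_le_dist f hf _ (half_pos hε)).biUnion fun q _ =>
      (Set.finite_singleton q.1).prod (hF.hasBoundedBalls_entInv.finite_entBall q.2)).union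
      ((hF.finite_le_dist f hf _ (half_pos hε)).biUnion fun q _ =>
      (hE.hasBoundedBalls_entInv.finite_entBall q.2).prod (Set.finite_singleton q.1))).subset ?_
    rintro ⟨x, z⟩ ⟨⟨y, hxy, hzy⟩, hxz⟩
    have := dist_triangle_right (f x) (f z) (f y)
    by_cases h : ε / 2 ≤ dist (f x) (f y)
    · exact Or.inl (Set.mem_biUnion (x := (x, y)) ⟨hxy, h⟩ ⟨rfl, hzy⟩)
    · exact Or.inr (Set.mem_biUnion (x := (z, y)) ⟨hzy, by linarith⟩ ⟨hxy, rfl⟩)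

end IsVanishing

lemma isVanishing_diagonal (𝓕 : Set (X → M)) : IsVanishing 𝓕 (Set.diagonal X) where
  hasBoundedBalls := hasBoundedBalls_diagonal
  hasBoundedBalls_entInv := entInv_diagonal (X := X) ▸ hasBoundedBalls_diagonal
  finite_le_dist f _ ε hε := Set.finite_empty.subset fun p ⟨hp, h⟩ => by
    rw [Set.mem_diagonal_iff.1 hp, dist_self] at h
    exact hε.not_ge h

lemma Set.Finite.isVanishing {S : Set (X × X)} (hS : S.Finite) (𝓕 : Set (X → M)) :
    IsVanishing 𝓕 S where
  hasBoundedBalls := hS.hasBoundedBalls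
  hasBoundedBalls_entInv := (hS.preimage Prod.swap_injective.injOn).hasBoundedBalls
  finite_le_dist _ _ _ _ := hS.subset fun _ hp => hp.1

lemma isVanishing_range {𝓕 : Set (X → M)} {a b : ℕ → X} (ha : Injective a) (hb : Injective b)
    (hab : ∀ f ∈ 𝓕, Tendsto (fun n => dist (f (a n)) (f (b n))) atTop (𝓝 0)) :
    IsVanishing 𝓕 (range fun n => (a n, b n)) where
  hasBoundedBalls := hasBoundedBalls_range_of_injective ha
  hasBoundedBalls_entInv := entInv_range a b ▸ hasBoundedBalls_range_of_injective hb
  finite_le_dist f hf ε hε := by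
    have hfar : {n | ε ≤ dist (f (a n)) (f (b n))}.Finite := by
      simpa [← Nat.cofinite_eq_atTop] using (hab f hf).eventually (gt_mem_nhds hε)
    refine (hfar.image fun n => (a n, b n)).subset ?_
    rintro _ ⟨⟨n, rfl⟩, h⟩
    exact ⟨n, h, rfl⟩

end Vanishing

section CoarseStructure

variable {X : Type*} {M : Type*} [PseudoMetricSpace M] (𝓕 : Set (X → M))

theorem isCoarseStructure_vanishingCoarse : IsCoarseStructure (vanishingCoarse 𝓕) where
  ent _ hE := hE.1
  cover p := ⟨Set.diagonal X ∪ {p}, ⟨fun _ => Or.inl rfl,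
    (isVanishing_diagonal 𝓕).union ((Set.finite_singleton p).isVanishing 𝓕)⟩, Or.inr rfl⟩
  comp_subset E hE F hF := ⟨entComp E (entInv F),
    ⟨fun x => ⟨x, hE.1 x, hF.1 x⟩, hE.2.entComp_entInv hF.2⟩, subset_rfl⟩
  downward _ _ hE hEF hF := ⟨hE, hF.2.mono hEF⟩

theorem isFinitaryCoarse_vanishingCoarse : IsFinitaryCoarse (vanishingCoarse 𝓕) := by
  rintro E ⟨-, ⟨n, hn⟩, -, -⟩
  exact ⟨n, fun x => ⟨Set.finite_of_encard_le_coe (hn x),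
    Nat.cast_le.1 ((Set.ncard_le_encard _).trans (hn x))⟩⟩

variable {𝓕}

lemma IsBoundedSet.finite_of_vanishingCoarse {B : Set X}
    (hB : IsBoundedSet (vanishingCoarse 𝓕) B) : B.Finite :=
  let ⟨_, hE, _, hB⟩ := hB
  (hE.2.hasBoundedBalls.finite_entBall _).subset hB

lemma Set.Finite.isBoundedSet_vanishingCoarse [Nonempty X] {B : Set X} (hB : B.Finite) :
    IsBoundedSet (vanishingCoarse 𝓕) B := by
  obtain ⟨x⟩ := ‹Nonempty X›
  exact ⟨Set.diagonal X ∪ {x} ×ˢ B, ⟨fun _ => Or.inl rfl, (isVanishing_diagonal 𝓕).union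
    (((Set.finite_singleton x).prod hB).isVanishing 𝓕)⟩, x, fun _ hb => Or.inr ⟨rfl, hb⟩⟩

end CoarseStructure

section SlowlyOscillating

variable {X : Type*} {M N : Type*} [MetricSpace M] [MetricSpace N] {𝓕 : Set (X → M)}

theorem slowlyOscillating_of_mem [Nonempty X] {f : X → M} (hf : f ∈ 𝓕) :
    SlowlyOscillating (vanishingCoarse 𝓕) f := by
  intro ε hε E hE
  refine ⟨Prod.fst '' {p ∈ E | ε / 3 ≤ dist (f p.1) (f p.2)},
    ((hE.2.finite_le_dist f hf _ (by positivity)).image _).isBoundedSet_vanishingCoarse,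
    fun x hx => ?_⟩
  have hnear : ∀ y ∈ entBall E x, dist (f x) (f y) < ε / 3 :=
    fun y hy => not_le.1 fun h => hx ⟨(x, y), ⟨hy, h⟩, rfl⟩
  calc Metric.ediam (f '' entBall E x) ≤ ENNReal.ofReal (2 * ε / 3) :=
        Metric.ediam_le_of_forall_dist_le <| by
          rintro _ ⟨y, hy, rfl⟩ _ ⟨y', hy', rfl⟩
          linarith [dist_triangle_left (f y) (f y') (f x), hnear y hy, hnear y' hy']
    _ < ENNReal.ofReal ε := (ENNReal.ofReal_lt_ofReal_iff hε).2 (by linarith)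

theorem SlowlyOscillating.tendsto_dist_zero {φ : X → N}
    (hφ : SlowlyOscillating (vanishingCoarse 𝓕) φ) {a b : ℕ → X} (ha : Injective a)
    (hb : Injective b) (hab : ∀ f ∈ 𝓕, Tendsto (fun n => dist (f (a n)) (f (b n))) atTop (𝓝 0)) :
    Tendsto (fun n => dist (φ (a n)) (φ (b n))) atTop (𝓝 0) := by
  have hE : Set.diagonal X ∪ range (fun n => (a n, b n)) ∈ vanishingCoarse 𝓕 :=
    ⟨fun _ => Or.inl rfl, (isVanishing_diagonal 𝓕).union (isVanishing_range ha hb hab)⟩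
  refine tendsto_order.2 ⟨fun c hc => Eventually.of_forall fun n => hc.trans_le dist_nonneg,
    fun ε hε => ?_⟩
  obtain ⟨B, hB, hfar⟩ := hφ ε hε _ hE
  have hfin : ∀ᶠ n in atTop, a n ∉ B := Nat.cofinite_eq_atTop ▸
    ha.tendsto_cofinite.eventually hB.finite_of_vanishingCoarse.eventually_cofinite_notMem
  filter_upwards [hfin] with n hn
  rw [← edist_lt_ofReal]
  exact (Metric.edist_le_ediam_of_mem (mem_image_of_mem φ (Or.inl rfl))
    (mem_image_of_mem φ (Or.inr ⟨n, rfl⟩))).trans_lt (hfar _ hn)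

end SlowlyOscillating

section Topology

variable {K X : Type*} [TopologicalSpace K]

lemma infinite_range_of_tendsto_of_notMem [T1Space K] {ι : X → K} {u : ℕ → X} {z : K}
    (hu : Tendsto (ι ∘ u) atTop (𝓝 z)) (hz : z ∉ range ι) : (range u).Infinite := fun hfin =>
  hz <| image_subset_range ι _ <| (hfin.image ι).isClosed.mem_of_tendsto hu <|
    Eventually.of_forall fun n => mem_image_of_mem ι (mem_range_self n)

lemma exists_subseq_injective_injective [T1Space K] {ι : X → K} {a b : ℕ → X} {z : K}
    (ha : Tendsto (ι ∘ a) atTop (𝓝 z)) (hb : Tendsto (ι ∘ b) atTop (𝓝 z)) (hz : z ∉ range ι) :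
    ∃ g : ℕ → ℕ, Tendsto g atTop atTop ∧ Injective (a ∘ g) ∧ Injective (b ∘ g) := by
  obtain ⟨g, hg⟩ := (infinite_range_of_tendsto_of_notMem ha hz).exists_injective_comp
  have hbg : Tendsto (ι ∘ (b ∘ g)) atTop (𝓝 z) := hb.comp hg.of_comp.nat_tendsto_atTop
  obtain ⟨h, hh⟩ := (infinite_range_of_tendsto_of_notMem hbg hz).exists_injective_comp
  exact ⟨g ∘ h, (hg.of_comp.comp hh.of_comp).nat_tendsto_atTop, hg.comp hh.of_comp, hh⟩

lemma exists_seq_tendsto_of_mem_closure_image [FrechetUrysohnSpace K] {ι : X → K} {A : Set X}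
    {z : K} (hz : z ∈ closure (ι '' A)) :
    ∃ u : ℕ → X, (∀ n, u n ∈ A) ∧ Tendsto (ι ∘ u) atTop (𝓝 z) := by
  obtain ⟨v, hvA, hv⟩ := mem_closure_iff_seq_limit.1 hz
  choose u huA hu using hvA
  exact ⟨u, huA, by simpa only [comp_def, hu] using hv⟩

lemma mem_closure_image_iff_frequently {ι : X → K} {A : Set X} {z : K} :
    z ∈ closure (ι '' A) ↔ ∃ᶠ x in comap ι (𝓝 z), x ∈ A := by
  simp only [mem_closure_iff_frequently, frequently_comap, mem_image, and_comm]

instance discreteTopology_isolatedPoints : DiscreteTopology (isolatedPoints K) :=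
  discreteTopology_iff_isOpen_singleton.2 fun x => by
    rw [← Subtype.val_injective.preimage_image {x}, image_singleton]
    exact x.2.preimage continuous_subtype_val

variable {M : Type*} [MetricSpace M]

theorem disjoint_closure_image_of_slowlyOscillating [T1Space K] [FrechetUrysohnSpace K]
    {φ : isolatedPoints K → M} (hφ : SlowlyOscillating (vanishingCoarse (ucSet K ℝ)) φ)
    {A B : Set (isolatedPoints K)} {ε : ℝ} (hε : 0 < ε)
    (hAB : ∀ a ∈ A, ∀ b ∈ B, ε ≤ dist (φ a) (φ b)) :
    Disjoint (closure (((↑) : isolatedPoints K → K) '' A)) (closure ((↑) '' B)) := by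
  rw [Set.disjoint_left]
  intro z hzA hzB
  by_cases hz : z ∈ isolatedPoints K
  · obtain ⟨_, rfl, a, ha, rfl⟩ := mem_closure_iff.1 hzA {z} hz rfl
    obtain ⟨_, hba, b, hb, rfl⟩ := mem_closure_iff.1 hzB {a.1} hz rfl
    have := hAB a ha b hb
    rw [Subtype.val_injective hba, dist_self] at this
    exact hε.not_ge this
  · rw [← Subtype.range_val (s := isolatedPoints K)] at hz
    obtain ⟨a, haA, ha⟩ := exists_seq_tendsto_of_mem_closure_image hzA
    obtain ⟨b, hbB, hb⟩ := exists_seq_tendsto_of_mem_closure_image hzB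
    obtain ⟨g, hg, hag, hbg⟩ := exists_subseq_injective_injective ha hb hz
    have hclose := hφ.tendsto_dist_zero hag hbg fun f ⟨F, hF, hFf⟩ => by
      simpa [← hFf] using ((hF.tendsto z).comp (ha.comp hg)).dist ((hF.tendsto z).comp (hb.comp hg))
    exact hε.not_ge (ge_of_tendsto' hclose fun n => hAB _ (haA _) _ (hbB _))

theorem exists_tendsto_comap_nhds_of_slowlyOscillating [T1Space K] [FrechetUrysohnSpace K]
    [ProperSpace M] (hdense : Dense (isolatedPoints K)) {φ : isolatedPoints K → M}
    (hb : Bornology.IsBounded (range φ))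
    (hφ : SlowlyOscillating (vanishingCoarse (ucSet K ℝ)) φ) (z : K) :
    ∃ c, Tendsto φ (comap (↑) (𝓝 z)) (𝓝 c) := by
  have := mem_closure_iff_comap_neBot.1 (hdense z)
  obtain ⟨c, -, hc⟩ := hb.isCompact_closure.exists_clusterPt (f := map φ (comap (↑) (𝓝 z)))
    (le_principal_iff.2 <| mem_map.2 <| univ_mem' fun x => subset_closure (mem_range_self x))
  refine ⟨c, Metric.tendsto_nhds.2 fun ε hε => ?_⟩
  by_contra hfar
  have hA : z ∈ closure (((↑) : isolatedPoints K → K) '' {x | ε ≤ dist (φ x) c}) :=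
    mem_closure_image_iff_frequently.2 <| by simpa using not_eventually.1 hfar
  have hB : z ∈ closure (((↑) : isolatedPoints K → K) '' {x | dist (φ x) c < ε / 2}) :=
    mem_closure_image_iff_frequently.2 <| frequently_map.1 <|
      hc.frequently (Metric.ball_mem_nhds c (half_pos hε))
  refine (disjoint_closure_image_of_slowlyOscillating hφ (half_pos hε) ?_).ne_of_mem hA hB rfl
  rintro a (ha : ε ≤ dist (φ a) c) b (hb : dist (φ b) c < ε / 2)
  linarith [dist_triangle (φ a) (φ b) c]

lemma Dense.nonempty_homeomorph_closure_image {Z : Type*} [TopologicalSpace Z] [CompactSpace K]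
    [T2Space Z] {Φ : K → Z} (hΦ : Continuous Φ) (hinj : Injective Φ) {D : Set K}
    (hD : Dense D) : Nonempty (K ≃ₜ closure (Φ '' D)) := by
  have h := hΦ.isClosedEmbedding hinj
  rw [h.closure_image_eq, hD.closure_eq, image_univ]
  exact ⟨h.isEmbedding.toHomeomorph⟩

theorem comp_val_mem_soSet [CompactSpace K] [Nonempty (isolatedPoints K)] {f : K → ℝ}
    (hf : Continuous f) : f ∘ (↑) ∈ soSet (vanishingCoarse (ucSet K ℝ)) ℝ :=
  ⟨(isCompact_range hf).isBounded.subset (range_comp_subset_range _ _),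
    slowlyOscillating_of_mem ⟨f, hf, fun _ => rfl⟩⟩

theorem nonempty_homeomorph_hComp_vanishingCoarse [CompactSpace K] [T2Space K]
    [FrechetUrysohnSpace K] (hdense : Dense (isolatedPoints K)) :
    Nonempty (K ≃ₜ HComp (vanishingCoarse (ucSet K ℝ)) ℝ) := by
  let 𝓔 := vanishingCoarse (ucSet K ℝ)
  let Φ : K → soSet 𝓔 ℝ → ℝ := fun z φ => hdense.extend φ.1 z
  have hΦ : Continuous Φ := continuous_pi fun φ =>
    hdense.continuous_extend (exists_tendsto_comap_nhds_of_slowlyOscillating hdense φ.2.1 φ.2.2)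
  have hδ : Φ '' isolatedPoints K = range (deltaMap 𝓔 ℝ) := by
    rw [image_eq_range]
    congr 1
    funext x φ
    exact hdense.extend_eq continuous_of_discreteTopology x
  have hinj : Injective Φ := by
    intro z w hzw
    by_contra hne
    have : Nonempty (isolatedPoints K) := (hdense.nonempty_iff.2 ⟨z⟩).to_subtype
    obtain ⟨f, hfz, hfw, -⟩ := exists_continuous_zero_one_of_isClosed isClosed_singleton
      isClosed_singleton (disjoint_singleton.2 hne)
    have hext : hdense.extend (f ∘ (↑)) = f := hdense.extend_unique (fun _ => rfl) f.continuous
    have := congr_fun hzw ⟨_, comp_val_mem_soSet f.continuous⟩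
    simp only [Φ, hext, hfz rfl, hfw rfl] at this
    exact zero_ne_one this
  show Nonempty (K ≃ₜ closure (range (deltaMap 𝓔 ℝ)))
  rw [← hδ]
  exact hdense.nonempty_homeomorph_closure_image hΦ hinj

end Topology

/-- Every Fréchet–Urysohn compact Hausdorff space with dense set of
isolated points is homeomorphic to the Higson compactification of some finitary
coarse space. -/
theorem statement14 (K : Type u) [TopologicalSpace K] [CompactSpace K] [T2Space K]
    [FrechetUrysohnSpace K] (hdense : Dense (isolatedPoints K)) :
    ∃ (X : Type u) (𝓔 : Set (Set (X × X))), IsCoarseStructure 𝓔 ∧ IsFinitaryCoarse 𝓔 ∧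
      Nonempty (K ≃ₜ HComp 𝓔 ℝ) :=
  ⟨isolatedPoints K, vanishingCoarse (ucSet K ℝ), isCoarseStructure_vanishingCoarse _,
    isFinitaryCoarse_vanishingCoarse _, nonempty_homeomorph_hComp_vanishingCoarse hdense⟩
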